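/- Let Y, Z, Z' be random variables taking values in finite types, defined on a common probability space with a joint probability mass function, where Z takes values in a finite type of cardinality N ≥ 2, and suppose I(Z';Y) ≤ I(Z;Y) and H(Y) > 0. Then the normalized JEMMIG score (H(Z) + H(Y) − 2 I(Z;Y) + I(Z';Y)) / (log N + H(Y)) lies in the interval [0,1]. -/

import Mathlib

open Finset

/-- The distribution (pmf) of a random variable `f` on a finite sample space with pmf `p`. -/
noncomputable def dist {Ω A : Type*} [Fintype Ω] [DecidableEq A]
    (p : Ω → ℝ) (f : Ω → A) (a : A) : ℝ :=
  ∑ ω, if f ω = a then p ω else 0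

/-- Shannon entropy of a random variable `f` (convention `0 · log 0 = 0`). -/
noncomputable def entropy {Ω A : Type*} [Fintype Ω] [Fintype A] [DecidableEq A]
    (p : Ω → ℝ) (f : Ω → A) : ℝ :=
  -∑ a, dist p f a * Real.log (dist p f a)

/-- Mutual information `I(f;g) = H(f) + H(g) − H(f,g)`. -/
noncomputable def mutualInfo {Ω A B : Type*} [Fintype Ω] [Fintype A] [Fintype B]
    [DecidableEq A] [DecidableEq B] (p : Ω → ℝ) (f : Ω → A) (g : Ω → B) : ℝ :=
  entropy p f + entropy p g - entropy p (fun ω => (f ω, g ω))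

/-- The conditional distribution of `f` given `h = c`. -/
noncomputable def condDist {Ω A C : Type*} [Fintype Ω] [DecidableEq A] [DecidableEq C]
    (p : Ω → ℝ) (f : Ω → A) (h : Ω → C) (c : C) (a : A) : ℝ :=
  (∑ ω, if f ω = a ∧ h ω = c then p ω else 0) / dist p h c

/-- The entropy of `f` conditioned on the event `h = c`. -/
noncomputable def condEntropy {Ω A C : Type*} [Fintype Ω] [Fintype A] [Fintype C]
    [DecidableEq A] [DecidableEq C] (p : Ω → ℝ) (f : Ω → A) (h : Ω → C) (c : C) : ℝ :=
  -∑ a, condDist p f h c a * Real.log (condDist p f h c a)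

/-- Conditional mutual information
`I(f;g | h) = ∑_c P(h=c) [H(f|h=c) + H(g|h=c) − H(f,g|h=c)]`. -/
noncomputable def condMutualInfo {Ω A B C : Type*} [Fintype Ω] [Fintype A] [Fintype B]
    [Fintype C] [DecidableEq A] [DecidableEq B] [DecidableEq C]
    (p : Ω → ℝ) (f : Ω → A) (g : Ω → B) (h : Ω → C) : ℝ :=
  ∑ c, dist p h c *
    (condEntropy p f h c + condEntropy p g h c
      - condEntropy p (fun ω => (f ω, g ω)) h c)

/-!
Gibbs' inequality `∑ w log q ≤ ∑ w log w` (for `∑ q ≤ ∑ w`) gives `H(Z) ≤ log N` and the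
subadditivity `H(U,V) ≤ H(U) + H(V)`, i.e. `0 ≤ I(U;V)`. Each mass of `U` is at most the mass of
`k ∘ U` at its image, so `H(k ∘ U) ≤ H(U)`; with `k` a projection, `I(U;V) ≤ min (H U) (H V)`.
Writing `I = I(Z;Y)` and `I' = I(Z';Y)`, the numerator is `(H Z - I) + (H Y - I) + I' ≥ 0` and,
as `0 ≤ I' ≤ I`, at most `H Z + H Y - I ≤ log N + H Y`. So the quotient lies in `[0,1]`, also
when the denominator vanishes (`x / 0 = 0`).
-/

theorem mul_log_sub_mul_log_le_sub {w q : ℝ} (hw : 0 ≤ w) (hq : 0 ≤ q)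
    (hwq : 0 < w → 0 < q) :
    w * Real.log q - w * Real.log w ≤ q - w := by
  rcases hw.eq_or_lt with rfl | hw
  · simpa using hq
  have hq := hwq hw
  calc w * Real.log q - w * Real.log w = w * Real.log (q / w) := by
        rw [Real.log_div hq.ne' hw.ne']; ring
    _ ≤ w * (q / w - 1) := by gcongr; exact Real.log_le_sub_one_of_pos (div_pos hq hw)
    _ = q - w := by field_simp

theorem Finset.sum_mul_log_le_sum_mul_log {ι : Type*} (s : Finset ι) {w q : ι → ℝ}
    (hw : ∀ i ∈ s, 0 ≤ w i) (hq : ∀ i ∈ s, 0 ≤ q i) (hwq : ∀ i ∈ s, 0 < w i → 0 < q i)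
    (hsum : ∑ i ∈ s, q i ≤ ∑ i ∈ s, w i) :
    ∑ i ∈ s, w i * Real.log (q i) ≤ ∑ i ∈ s, w i * Real.log (w i) := by
  have := Finset.sum_le_sum fun i hi =>
    mul_log_sub_mul_log_le_sub (hw i hi) (hq i hi) (hwq i hi)
  rw [Finset.sum_sub_distrib, Finset.sum_sub_distrib] at this
  linarith

section Entropy

variable {Ω : Type*} [Fintype Ω] (p : Ω → ℝ)

theorem dist_nonneg_of_nonneg {A : Type*} [DecidableEq A] (hp : ∀ ω, 0 ≤ p ω) (f : Ω → A)
    (a : A) : 0 ≤ dist p f a :=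
  Finset.sum_nonneg fun ω _ => by split_ifs <;> simp [hp ω]

theorem sum_dist_mul {A : Type*} [Fintype A] [DecidableEq A] (f : Ω → A) (φ : A → ℝ) :
    ∑ a, dist p f a * φ a = ∑ ω, p ω * φ (f ω) := by
  simp only [_root_.dist, Finset.sum_mul, ite_mul, zero_mul]
  rw [Finset.sum_comm]
  simp

theorem sum_dist {A : Type*} [Fintype A] [DecidableEq A] (f : Ω → A) :
    ∑ a, dist p f a = ∑ ω, p ω := by
  simpa using sum_dist_mul p f 1

theorem sum_dist_mul_comp {A C : Type*} [Fintype A] [Fintype C] [DecidableEq A]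
    [DecidableEq C] (f : Ω → A) (k : A → C) (φ : C → ℝ) :
    ∑ a, dist p f a * φ (k a) = ∑ c, dist p (fun ω => k (f ω)) c * φ c := by
  rw [sum_dist_mul p f (fun a => φ (k a)), sum_dist_mul]

theorem dist_le_dist_comp {A C : Type*} [DecidableEq A] [DecidableEq C] (hp : ∀ ω, 0 ≤ p ω)
    (f : Ω → A) (k : A → C) (a : A) : dist p f a ≤ dist p (fun ω => k (f ω)) (k a) :=
  Finset.sum_le_sum fun ω _ => by
    by_cases h : f ω = a
    · simp [h]
    · rw [if_neg h]; split_ifs <;> simp [hp ω]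

theorem entropy_le_log_card {A : Type*} [Fintype A] [DecidableEq A] (hp : ∀ ω, 0 ≤ p ω)
    (hpsum : ∑ ω, p ω = 1) (f : Ω → A) : entropy p f ≤ Real.log (Fintype.card A) := by
  have hcard : ∀ a : A, 0 < (Fintype.card A : ℝ)⁻¹ := fun a => by
    have : Nonempty A := ⟨a⟩
    positivity
  have key := Finset.univ.sum_mul_log_le_sum_mul_log (q := fun _ => (Fintype.card A : ℝ)⁻¹)
    (fun a _ => dist_nonneg_of_nonneg p hp f a) (fun a _ => (hcard a).le)
    (fun a _ _ => hcard a)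
    (by simpa [sum_dist, hpsum] using mul_inv_le_one (a := (Fintype.card A : ℝ)))
  rw [← Finset.sum_mul, sum_dist, hpsum, Real.log_inv] at key
  rw [entropy]
  linarith

theorem entropy_comp_le {A C : Type*} [Fintype A] [Fintype C] [DecidableEq A] [DecidableEq C]
    (hp : ∀ ω, 0 ≤ p ω) (f : Ω → A) (k : A → C) :
    entropy p (fun ω => k (f ω)) ≤ entropy p f := by
  set d := dist p fun ω => k (f ω)
  have key :
      ∑ a, dist p f a * Real.log (dist p f a) ≤ ∑ a, dist p f a * Real.log (d (k a)) :=
    Finset.sum_le_sum fun a _ => by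
      rcases (dist_nonneg_of_nonneg p hp f a).eq_or_lt with h | h
      · simp [← h]
      · gcongr
        exact dist_le_dist_comp p hp f k a
  rw [sum_dist_mul_comp p f k fun c => Real.log (d c)] at key
  rw [entropy, entropy]
  linarith

theorem entropy_pair_le_add {A B : Type*} [Fintype A] [Fintype B] [DecidableEq A]
    [DecidableEq B] (hp : ∀ ω, 0 ≤ p ω) (hpsum : ∑ ω, p ω = 1) (f : Ω → A) (g : Ω → B) :
    entropy p (fun ω => (f ω, g ω)) ≤ entropy p f + entropy p g := by
  set r := dist p fun ω => (f ω, g ω)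
  have hr : ∀ x, 0 ≤ r x := dist_nonneg_of_nonneg p hp _
  have hfst : ∀ x, r x ≤ dist p f x.1 := fun x => dist_le_dist_comp p hp _ Prod.fst x
  have hsnd : ∀ x, r x ≤ dist p g x.2 := fun x => dist_le_dist_comp p hp _ Prod.snd x
  have key := Finset.univ.sum_mul_log_le_sum_mul_log (w := r)
    (q := fun x => dist p f x.1 * dist p g x.2) (fun x _ => hr x)
    (fun x _ => mul_nonneg ((hr x).trans (hfst x)) ((hr x).trans (hsnd x)))
    (fun x _ hx => mul_pos (hx.trans_le (hfst x)) (hx.trans_le (hsnd x)))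
    (by simp [Fintype.sum_prod_type, ← Finset.mul_sum, r, sum_dist, hpsum])
  have hsplit : ∀ x, r x * Real.log (dist p f x.1 * dist p g x.2)
      = r x * Real.log (dist p f x.1) + r x * Real.log (dist p g x.2) := fun x => by
    rcases (hr x).eq_or_lt with h | h
    · simp [← h]
    · rw [Real.log_mul (h.trans_le (hfst x)).ne' (h.trans_le (hsnd x)).ne', mul_add]
  have hmarg_fst :
      ∑ x, r x * Real.log (dist p f x.1) = ∑ a, dist p f a * Real.log (dist p f a) :=
    sum_dist_mul_comp p (fun ω => (f ω, g ω)) Prod.fst fun a => Real.log (dist p f a)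
  have hmarg_snd :
      ∑ x, r x * Real.log (dist p g x.2) = ∑ b, dist p g b * Real.log (dist p g b) :=
    sum_dist_mul_comp p (fun ω => (f ω, g ω)) Prod.snd fun b => Real.log (dist p g b)
  simp only [hsplit, Finset.sum_add_distrib, hmarg_fst, hmarg_snd] at key
  rw [entropy, entropy, entropy]
  linarith

variable {A B : Type*} [Fintype A] [Fintype B] [DecidableEq A] [DecidableEq B]

theorem mutualInfo_nonneg (hp : ∀ ω, 0 ≤ p ω) (hpsum : ∑ ω, p ω = 1) (f : Ω → A)
    (g : Ω → B) : 0 ≤ mutualInfo p f g := by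
  have := entropy_pair_le_add p hp hpsum f g
  rw [mutualInfo]
  linarith

theorem mutualInfo_le_entropy_left (hp : ∀ ω, 0 ≤ p ω) (f : Ω → A) (g : Ω → B) :
    mutualInfo p f g ≤ entropy p f := by
  have : entropy p g ≤ _ := entropy_comp_le p hp (fun ω => (f ω, g ω)) Prod.snd
  rw [mutualInfo]
  linarith

theorem mutualInfo_le_entropy_right (hp : ∀ ω, 0 ≤ p ω) (f : Ω → A) (g : Ω → B) :
    mutualInfo p f g ≤ entropy p g := by
  have : entropy p f ≤ _ := entropy_comp_le p hp (fun ω => (f ω, g ω)) Prod.fst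
  rw [mutualInfo]
  linarith

end Entropy

theorem normalized_jemmig_mem_unitInterval_general
    {Ω A A' B : Type*} [Fintype Ω] [Fintype A] [Fintype A'] [Fintype B]
    [DecidableEq A] [DecidableEq A'] [DecidableEq B]
    (p : Ω → ℝ) (hp : ∀ ω, 0 ≤ p ω) (hpsum : ∑ ω, p ω = 1)
    (Y : Ω → B) (Z : Ω → A) (Z' : Ω → A')
    (N : ℕ) (hN : Fintype.card A = N)
    (hle : mutualInfo p Z' Y ≤ mutualInfo p Z Y) :
    0 ≤ (entropy p Z + entropy p Y - 2 * mutualInfo p Z Y + mutualInfo p Z' Y)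
          / (Real.log N + entropy p Y) ∧
      (entropy p Z + entropy p Y - 2 * mutualInfo p Z Y + mutualInfo p Z' Y)
          / (Real.log N + entropy p Y) ≤ 1 := by
  have hZ : entropy p Z ≤ Real.log N := hN ▸ entropy_le_log_card p hp hpsum Z
  have hI' := mutualInfo_nonneg p hp hpsum Z' Y
  have hIZ := mutualInfo_le_entropy_left p hp Z Y
  have hIY := mutualInfo_le_entropy_right p hp Z Y
  have hnum : 0 ≤ entropy p Z + entropy p Y - 2 * mutualInfo p Z Y + mutualInfo p Z' Y := by
    linarith
  have hnum_le : entropy p Z + entropy p Y - 2 * mutualInfo p Z Y + mutualInfo p Z' Y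
      ≤ Real.log N + entropy p Y := by
    linarith
  have hden := hnum.trans hnum_le
  exact ⟨div_nonneg hnum hden, div_le_one_of_le₀ hnum_le hden⟩

/-- The normalized JEMMIG score
`(H(Z) + H(Y) − 2 I(Z;Y) + I(Z';Y)) / (log N + H(Y))` lies in `[0,1]`. -/
theorem normalized_jemmig_mem_unitInterval
    {Ω A A' B : Type*} [Fintype Ω] [Fintype A] [Fintype A'] [Fintype B]
    [DecidableEq A] [DecidableEq A'] [DecidableEq B]
    (p : Ω → ℝ) (hp : ∀ ω, 0 ≤ p ω) (hpsum : ∑ ω, p ω = 1)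
    (Y : Ω → B) (Z : Ω → A) (Z' : Ω → A')
    (N : ℕ) (hN : Fintype.card A = N) (hN2 : 2 ≤ N)
    (hle : mutualInfo p Z' Y ≤ mutualInfo p Z Y)
    (hY : 0 < entropy p Y) :
    0 ≤ (entropy p Z + entropy p Y - 2 * mutualInfo p Z Y + mutualInfo p Z' Y)
          / (Real.log N + entropy p Y) ∧
      (entropy p Z + entropy p Y - 2 * mutualInfo p Z Y + mutualInfo p Z' Y)
          / (Real.log N + entropy p Y) ≤ 1 :=
  normalized_jemmig_mem_unitInterval_general p hp hpsum Y Z Z' N hN hle
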